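/- Let W = I₈ + λ⁻¹W₁ + λ⁻²W₂ with W₁ = [[0, u, 0], [-v^♯, 0, -u^♯], [0, v, 0]] and W₂ = [[0, 0, ǧ], [0, 0, 0], [0, 0, 0]] in 2+4+2 block form, W₀ = [[a, 0, b], [0, q, 0], [c, 0, d]] block-diagonal-plus-corners with q invertible, and suppose the Laurent coefficient equation W₁W₀ + W₂W₀J̌₈W̄₁ᵗǰ₈ = H₁ + J̌₈H̄₁ᵗǰ₈H₂ holds, where H₁ = [[0, f, 0], [0, 0, -f^♯], [0, 0, 0]], H₂ = [[0, 0, g], [0, 0, 0], [0, 0, 0]]. Then comparing the middle-row/middle-column blocks forces v·q = 0, hence v = 0. -/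

import Mathlib

open Matrix

abbrev Idx8 := Fin 2 ⊕ (Fin 4 ⊕ Fin 2)

/-- Assemble an 8×8 matrix from nine blocks in the 2+4+2 partition. -/
def blk (A11 : Matrix (Fin 2) (Fin 2) ℂ) (A12 : Matrix (Fin 2) (Fin 4) ℂ)
    (A13 : Matrix (Fin 2) (Fin 2) ℂ)
    (A21 : Matrix (Fin 4) (Fin 2) ℂ) (A22 : Matrix (Fin 4) (Fin 4) ℂ)
    (A23 : Matrix (Fin 4) (Fin 2) ℂ)
    (A31 : Matrix (Fin 2) (Fin 2) ℂ) (A32 : Matrix (Fin 2) (Fin 4) ℂ)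
    (A33 : Matrix (Fin 2) (Fin 2) ℂ) : Matrix Idx8 Idx8 ℂ :=
  Matrix.of fun i j =>
    match i, j with
    | .inl i, .inl j => A11 i j
    | .inl i, .inr (.inl j) => A12 i j
    | .inl i, .inr (.inr j) => A13 i j
    | .inr (.inl i), .inl j => A21 i j
    | .inr (.inl i), .inr (.inl j) => A22 i j
    | .inr (.inl i), .inr (.inr j) => A23 i j
    | .inr (.inr i), .inl j => A31 i j
    | .inr (.inr i), .inr (.inl j) => A32 i j
    | .inr (.inr i), .inr (.inr j) => A33 i j

/-- The `n×n` anti-diagonal matrix of ones. -/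
def Jmat (n : ℕ) : Matrix (Fin n) (Fin n) ℂ :=
  Matrix.of fun i j => if (i : ℕ) + (j : ℕ) = n - 1 then 1 else 0

/-- `x^♯ = J₄ xᵀ J₂`. -/
noncomputable def sharp (x : Matrix (Fin 2) (Fin 4) ℂ) : Matrix (Fin 4) (Fin 2) ℂ :=
  Jmat 4 * xᵀ * Jmat 2

/-- Entrywise complex conjugate. -/
noncomputable def mconj {m n : Type*} (A : Matrix m n ℂ) : Matrix m n ℂ :=
  A.map (starRingEnd ℂ)

/-! Only the `(3,2)` block of the coefficient equation is needed. On the left it is `v q`: the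
`W₂`-term vanishes there because `W₂` has a zero bottom block row. On the right both terms vanish
there, since `H₁` has a zero bottom block row and `H₂` a zero middle block column. -/

section RowsAndColumns

variable {l m n R : Type*} [Fintype m] [NonUnitalNonAssocSemiring R]

theorem mul_apply_eq_zero_of_row_eq_zero {A : Matrix l m R} {i : l} (hA : ∀ k, A i k = 0)
    (B : Matrix m n R) (j : n) : (A * B) i j = 0 := by
  simp only [mul_apply, hA, zero_mul, Finset.sum_const_zero]

theorem mul_apply_eq_zero_of_col_eq_zero (A : Matrix l m R) {B : Matrix m n R} {j : n}
    (hB : ∀ k, B k j = 0) (i : l) : (A * B) i j = 0 := by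
  simp only [mul_apply, hB, mul_zero, Finset.sum_const_zero]

end RowsAndColumns

theorem blk_mul_blk_apply_inr_inr_inr_inl
    (A11 A13 A31 A33 : Matrix (Fin 2) (Fin 2) ℂ) (A12 A32 : Matrix (Fin 2) (Fin 4) ℂ)
    (A21 A23 : Matrix (Fin 4) (Fin 2) ℂ) (A22 : Matrix (Fin 4) (Fin 4) ℂ)
    (B11 B13 B31 B33 : Matrix (Fin 2) (Fin 2) ℂ) (B12 B32 : Matrix (Fin 2) (Fin 4) ℂ)
    (B21 B23 : Matrix (Fin 4) (Fin 2) ℂ) (B22 : Matrix (Fin 4) (Fin 4) ℂ) (i : Fin 2) (j : Fin 4) :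
    (blk A11 A12 A13 A21 A22 A23 A31 A32 A33 * blk B11 B12 B13 B21 B22 B23 B31 B32 B33)
        (.inr (.inr i)) (.inr (.inl j)) = (A31 * B12 + A32 * B22 + A33 * B32) i j := by
  simp only [mul_apply, Fintype.sum_sum_type, blk, of_apply, Matrix.add_apply, add_assoc]

theorem blk_apply_inr_inr_eq_zero_of_bottom_row_eq_zero
    (A11 : Matrix (Fin 2) (Fin 2) ℂ) (A12 : Matrix (Fin 2) (Fin 4) ℂ) (A13 : Matrix (Fin 2) (Fin 2) ℂ)
    (A21 : Matrix (Fin 4) (Fin 2) ℂ) (A22 : Matrix (Fin 4) (Fin 4) ℂ) (A23 : Matrix (Fin 4) (Fin 2) ℂ)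
    (i : Fin 2) (k : Idx8) :
    blk A11 A12 A13 A21 A22 A23 0 0 0 (.inr (.inr i)) k = 0 := by
  rcases k with k | k | k <;> rfl

theorem blk_apply_inr_inl_eq_zero_of_middle_col_eq_zero
    (A11 A13 A31 A33 : Matrix (Fin 2) (Fin 2) ℂ) (A21 A23 : Matrix (Fin 4) (Fin 2) ℂ)
    (j : Fin 4) (k : Idx8) :
    blk A11 0 A13 A21 0 A23 A31 0 A33 k (.inr (.inl j)) = 0 := by
  rcases k with k | k | k <;> rfl

theorem v_eq_zero_of_coeff_eq_general
    (u v : Matrix (Fin 2) (Fin 4) ℂ) (gC : Matrix (Fin 2) (Fin 2) ℂ)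
    (a b c d : Matrix (Fin 2) (Fin 2) ℂ) (q : Matrix (Fin 4) (Fin 4) ℂ)
    (hq : IsUnit q)
    (f : Matrix (Fin 2) (Fin 4) ℂ) (g : Matrix (Fin 2) (Fin 2) ℂ)
    (J8c : Matrix Idx8 Idx8 ℂ)
    (heq : blk 0 u 0 (-(sharp v)) 0 (-(sharp u)) 0 v 0 * blk a 0 b 0 q 0 c 0 d
      + blk 0 0 gC 0 0 0 0 0 0 * blk a 0 b 0 q 0 c 0 d * J8c
          * (mconj (blk 0 u 0 (-(sharp v)) 0 (-(sharp u)) 0 v 0))ᵀ * J8c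
      = blk 0 f 0 0 0 (-(sharp f)) 0 0 0
        + J8c * (mconj (blk 0 f 0 0 0 (-(sharp f)) 0 0 0))ᵀ * J8c
            * blk 0 0 g 0 0 0 0 0 0) :
    v * q = 0 ∧ v = 0 := by
  have hvq : v * q = 0 := by
    ext i j
    have h := congrFun (congrFun heq (.inr (.inr i))) (.inr (.inl j))
    have hW₂ := blk_apply_inr_inr_eq_zero_of_bottom_row_eq_zero 0 0 gC 0 0 0 i
    have hH₁ := blk_apply_inr_inr_eq_zero_of_bottom_row_eq_zero 0 f 0 0 0 (-(sharp f)) i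
    have hH₂ := blk_apply_inr_inl_eq_zero_of_middle_col_eq_zero 0 g 0 0 0 0 j
    rw [Matrix.add_apply, Matrix.add_apply, blk_mul_blk_apply_inr_inr_inr_inl,
      mul_apply_eq_zero_of_row_eq_zero (mul_apply_eq_zero_of_row_eq_zero
        (mul_apply_eq_zero_of_row_eq_zero (mul_apply_eq_zero_of_row_eq_zero hW₂ _) _) _),
      hH₁ (.inr (.inl j)), mul_apply_eq_zero_of_col_eq_zero _ hH₂] at h
    simpa using h
  have hv : v = 0 := by
    rw [← mul_nonsing_inv_cancel_right q v ((isUnit_iff_isUnit_det q).mp hq), hvq, Matrix.zero_mul]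
  exact ⟨hvq, hv⟩

/-- Comparing the `(3,2)` block of the Laurent coefficient equation forces `v q = 0`,
hence `v = 0` since `q` is invertible. -/
theorem v_eq_zero_of_coeff_eq
    (u v : Matrix (Fin 2) (Fin 4) ℂ) (gC : Matrix (Fin 2) (Fin 2) ℂ)
    (a b c d : Matrix (Fin 2) (Fin 2) ℂ) (q : Matrix (Fin 4) (Fin 4) ℂ)
    (hq : IsUnit q)
    (f : Matrix (Fin 2) (Fin 4) ℂ) (g : Matrix (Fin 2) (Fin 2) ℂ)
    (J8c : Matrix Idx8 Idx8 ℂ) (hJ : J8cᵀ = J8c)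
    (heq : blk 0 u 0 (-(sharp v)) 0 (-(sharp u)) 0 v 0 * blk a 0 b 0 q 0 c 0 d
      + blk 0 0 gC 0 0 0 0 0 0 * blk a 0 b 0 q 0 c 0 d * J8c
          * (mconj (blk 0 u 0 (-(sharp v)) 0 (-(sharp u)) 0 v 0))ᵀ * J8c
      = blk 0 f 0 0 0 (-(sharp f)) 0 0 0
        + J8c * (mconj (blk 0 f 0 0 0 (-(sharp f)) 0 0 0))ᵀ * J8c
            * blk 0 0 g 0 0 0 0 0 0) :
    v * q = 0 ∧ v = 0 :=
  v_eq_zero_of_coeff_eq_general u v gC a b c d q hq f g J8c heq
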